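/- Let p₁ ≤ p₂ be in [0,1]. For bond percolation on a finite graph G, for any vertex v and integer r > 0, the expected size of ∂B_v(r) under p₂-percolation is at most (p₂/p₁)^r times the expected size of ∂B_v(r) under p₁-percolation. -/

import Mathlib

open Classical

noncomputable section

/-- Two vertices are joined by an edge of `G` that is open in the configuration `ω`. -/
def OpenAdj {V : Type*} (G : SimpleGraph V) (ω : Sym2 V → Bool) (x y : V) : Prop :=
  G.Adj x y ∧ ω s(x, y) = true

/-- `x` and `y` are connected by an open path with at most `r` edges. -/
def ConnWithin {V : Type*} (G : SimpleGraph V) (ω : Sym2 V → Bool) (x y : V) (r : ℕ) : Prop :=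
  ∃ l : List V, List.Chain (OpenAdj G ω) x l ∧
    (x :: l).getLast (List.cons_ne_nil x l) = y ∧ l.length ≤ r

/-- The intrinsic (open-path) distance from `x` to `y` equals `r`. -/
def DistEq {V : Type*} (G : SimpleGraph V) (ω : Sym2 V → Bool) (x y : V) (r : ℕ) : Prop :=
  ConnWithin G ω x y r ∧ ∀ s < r, ¬ ConnWithin G ω x y s

/-- The boundary `∂B_x(r)` of the intrinsic ball of radius `r` around `x` is nonempty. -/
def SphereNonempty {V : Type*} (G : SimpleGraph V) (ω : Sym2 V → Bool) (x : V) (r : ℕ) : Prop :=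
  ∃ y, DistEq G ω x y r

/-- The Bernoulli product weight of a single percolation configuration. -/
def edgeWeight {V : Type*} [Fintype V] [DecidableEq V] (p : ℝ) (ω : Sym2 V → Bool) : ℝ :=
  ∏ e : Sym2 V, if ω e then p else 1 - p

/-- The probability of the event `S` under bond percolation with parameter `p`. -/
def percProb {V : Type*} [Fintype V] [DecidableEq V] (p : ℝ) (S : Set (Sym2 V → Bool)) : ℝ :=
  ∑ ω : Sym2 V → Bool, if ω ∈ S then edgeWeight p ω else 0

/-- Expectation under bond percolation with parameter `p`. -/
def percExp {V : Type*} [Fintype V] [DecidableEq V] (p : ℝ) (f : (Sym2 V → Bool) → ℝ) : ℝ :=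
  ∑ ω : Sym2 V → Bool, edgeWeight p ω * f ω

/-- The number of vertices at intrinsic distance exactly `r` from `x`: `|∂B_x(r)|`. -/
def sphereSize {V : Type*} (G : SimpleGraph V) (ω : Sym2 V → Bool) (x : V) (r : ℕ) : ℕ :=
  Nat.card {y : V // DistEq G ω x y r}

/-!
Realise `p₁`-percolation as `ω ∧ η`, with `ω` a `p₂`-configuration and `η` an independent
`(p₁/p₂)`-configuration. Thinning can only increase intrinsic distances, so if `v` and `y` are at
distance exactly `r` in `ω`, they stay so in `ω ∧ η` as soon as `η` keeps the at most `r` edges of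
one geodesic, which happens with probability at least `(p₁/p₂)^r`. Summing over `y` gives the claim.
-/

open Finset

def bernoulliWeight {E : Type*} [Fintype E] (p : ℝ) (ω : E → Bool) : ℝ :=
  ∏ e, if ω e then p else 1 - p

section Bernoulli

variable {E : Type*} [Fintype E]

theorem bernoulliWeight_nonneg {p : ℝ} (hp₀ : 0 ≤ p) (hp₁ : p ≤ 1) (ω : E → Bool) :
    0 ≤ bernoulliWeight p ω :=
  prod_nonneg fun e _ => by split_ifs <;> linarith

variable [DecidableEq E]

/-- The image of a product weight under a coordinatewise map `m` is again a product weight. -/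
theorem sum_prod_mul_comp_eq_sum_prod_sum_fiber_mul {R α β : Type*} [CommSemiring R] [Fintype α]
    [Fintype β] [DecidableEq β] (a : α → R) (m : α → β) (F : (E → β) → R) :
    ∑ ζ : E → α, (∏ e, a (ζ e)) * F (m ∘ ζ)
      = ∑ ω : E → β, (∏ e, ∑ x with m x = ω e, a x) * F ω := by
  have hfiber (ω : E → β) :
      ∏ e, ∑ x with m x = ω e, a x = ∑ ζ with m ∘ ζ = ω, ∏ e, a (ζ e) := by
    rw [prod_univ_sum]
    congr 1
    ext ζ
    simp [funext_iff]
  simp_rw [hfiber, sum_mul]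
  rw [← sum_fiberwise univ (fun ζ : E → α => m ∘ ζ)]
  refine sum_congr rfl fun ω _ => sum_congr rfl fun ζ hζ => ?_
  rw [(mem_filter.1 hζ).2]

def bernoulliProb (p : ℝ) (D : Set (E → Bool)) : ℝ :=
  ∑ ω, if ω ∈ D then bernoulliWeight p ω else 0

theorem bernoulliProb_forall_mem_eq_pow (q : ℝ) (S : Finset E) :
    bernoulliProb q {η | ∀ e ∈ S, η e = true} = q ^ #S := by
  let t : E → Finset Bool := fun e => if e ∈ S then {true} else univ
  have hcyl : Fintype.piFinset t = ({η | ∀ e ∈ S, η e = true} : Finset (E → Bool)) := by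
    ext η
    simp only [Fintype.mem_piFinset, mem_filter, mem_univ, true_and, t]
    refine forall_congr' fun e => ?_
    split_ifs with he <;> simp [he]
  calc bernoulliProb q {η | ∀ e ∈ S, η e = true}
      = ∑ η ∈ Fintype.piFinset t, ∏ e, if η e then q else 1 - q := by
        rw [bernoulliProb, hcyl, sum_filter]
        congr!
    _ = ∏ e, if e ∈ S then q else 1 := by
        rw [← prod_univ_sum t fun _ b => if b then q else 1 - q]
        refine prod_congr rfl fun e _ => ?_
        split_ifs with he <;> simp [t, he]
    _ = q ^ #S := by rw [prod_ite_mem, univ_inter, prod_const]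

theorem sum_sum_bernoulliWeight_mul_and (p q : ℝ) (F : (E → Bool) → ℝ) :
    ∑ ω : E → Bool, ∑ η : E → Bool,
        bernoulliWeight p ω * bernoulliWeight q η * F (fun e => ω e && η e)
      = ∑ ω : E → Bool, bernoulliWeight (p * q) ω * F ω := by
  let a : Bool × Bool → ℝ := fun b => (if b.1 then p else 1 - p) * (if b.2 then q else 1 - q)
  have hpairs : ∑ ω : E → Bool, ∑ η : E → Bool,
        bernoulliWeight p ω * bernoulliWeight q η * F (fun e => ω e && η e)
      = ∑ ζ : E → Bool × Bool, (∏ e, a (ζ e)) * F ((fun b => b.1 && b.2) ∘ ζ) := by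
    rw [← Fintype.sum_prod_type']
    refine (Fintype.sum_equiv (Equiv.arrowProdEquivProdArrow E (fun _ => Bool) fun _ => Bool)
      _ _ fun ζ => ?_).symm
    simp only [bernoulliWeight, a, prod_mul_distrib]
    rfl
  have hfiber (c : Bool) : ∑ b with (b.1 && b.2) = c, a b = if c then p * q else 1 - p * q := by
    rw [sum_filter, Fintype.sum_prod_type]
    cases c <;> simp [a]; ring
  rw [hpairs, sum_prod_mul_comp_eq_sum_prod_sum_fiber_mul]
  simp only [hfiber, bernoulliWeight]

def RobustUnderThinning (r : ℕ) (D : Set (E → Bool)) : Prop :=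
  ∀ ω ∈ D, ∃ S : Finset E, #S ≤ r ∧
    ∀ η : E → Bool, (∀ e ∈ S, η e = true) → (fun e => ω e && η e) ∈ D

theorem RobustUnderThinning.pow_mul_bernoulliProb_le {p q : ℝ} (hp₀ : 0 ≤ p) (hp₁ : p ≤ 1)
    (hq₀ : 0 ≤ q) (hq₁ : q ≤ 1) {r : ℕ} {D : Set (E → Bool)} (hD : RobustUnderThinning r D) :
    q ^ r * bernoulliProb p D ≤ bernoulliProb (p * q) D := by
  choose! S hS_card hS_thin using hD
  calc q ^ r * bernoulliProb p D
      ≤ ∑ ω, if ω ∈ D then bernoulliWeight p ω * q ^ #(S ω) else 0 := by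
        rw [bernoulliProb, mul_sum]
        refine sum_le_sum fun ω _ => ?_
        split_ifs with hω
        · rw [mul_comm]
          exact mul_le_mul_of_nonneg_left (pow_le_pow_of_le_one hq₀ hq₁ (hS_card ω hω))
            (bernoulliWeight_nonneg hp₀ hp₁ ω)
        · rw [mul_zero]
    _ = ∑ ω, ∑ η, bernoulliWeight p ω * bernoulliWeight q η *
          (if ω ∈ D ∧ ∀ e ∈ S ω, η e = true then 1 else 0) := by
        refine sum_congr rfl fun ω _ => ?_
        split_ifs with hω
        · rw [← bernoulliProb_forall_mem_eq_pow, bernoulliProb, mul_sum]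
          simp only [hω, true_and, Set.mem_ofPred_eq, mul_ite, mul_one, mul_zero]
        · simp [hω]
    _ ≤ ∑ ω, ∑ η, bernoulliWeight p ω * bernoulliWeight q η *
          (if (fun e => ω e && η e) ∈ D then 1 else 0) := by
        gcongr with ω _ η _
        · exact mul_nonneg (bernoulliWeight_nonneg hp₀ hp₁ ω) (bernoulliWeight_nonneg hq₀ hq₁ η)
        · split_ifs with h h'
          · exact le_rfl
          · exact absurd (hS_thin ω h.1 η h.2) h'
          · exact zero_le_one
          · exact le_rfl
    _ = bernoulliProb (p * q) D := by
        rw [sum_sum_bernoulliWeight_mul_and p q fun ω => if ω ∈ D then 1 else 0]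
        simp only [bernoulliProb, mul_ite, mul_one, mul_zero]

theorem RobustUnderThinning.bernoulliProb_le_div_pow_mul {p₁ p₂ : ℝ} (hp₁ : 0 < p₁)
    (h₁₂ : p₁ ≤ p₂) (hp₂ : p₂ ≤ 1) {r : ℕ} {D : Set (E → Bool)} (hD : RobustUnderThinning r D) :
    bernoulliProb p₂ D ≤ (p₂ / p₁) ^ r * bernoulliProb p₁ D := by
  have hp₂₀ : 0 < p₂ := hp₁.trans_le h₁₂
  have hthin := hD.pow_mul_bernoulliProb_le hp₂₀.le hp₂ (div_pos hp₁ hp₂₀).le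
    (div_le_one_of_le₀ h₁₂ hp₂₀.le)
  rw [mul_div_cancel₀ p₁ hp₂₀.ne'] at hthin
  have hinv : p₂ / p₁ * (p₁ / p₂) = 1 := by field_simp
  calc bernoulliProb p₂ D
      = (p₂ / p₁) ^ r * ((p₁ / p₂) ^ r * bernoulliProb p₂ D) := by
        rw [← mul_assoc, ← mul_pow, hinv, one_pow, one_mul]
    _ ≤ (p₂ / p₁) ^ r * bernoulliProb p₁ D := by
        gcongr

end Bernoulli

def pathEdges {V : Type*} : V → List V → List (Sym2 V)
  | _, [] => []
  | x, y :: l => s(x, y) :: pathEdges y l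

section Intrinsic

variable {V : Type*} {G : SimpleGraph V} {ω η : Sym2 V → Bool}

theorem length_pathEdges (x : V) (l : List V) : (pathEdges x l).length = l.length := by
  induction l generalizing x with
  | nil => rfl
  | cons y l ih => simp [pathEdges, ih]

theorem isChain_openAdj_and {x : V} {l : List V} (hl : (x :: l).IsChain (OpenAdj G ω))
    (hη : ∀ e ∈ pathEdges x l, η e = true) :
    (x :: l).IsChain (OpenAdj G fun e => ω e && η e) := by
  induction l generalizing x with
  | nil => exact .singleton x
  | cons y l ih =>
    obtain ⟨⟨hadj, hω⟩, hl⟩ := List.isChain_cons_cons.1 hl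
    refine List.isChain_cons_cons.2 ⟨⟨hadj, ?_⟩, ih hl fun e he => hη e (.tail _ he)⟩
    simp [hω, hη s(x, y) (.head _)]

theorem ConnWithin.mono {ω' : Sym2 V → Bool} (hωω' : ∀ e, ω e = true → ω' e = true) {x y : V}
    {r : ℕ} (h : ConnWithin G ω x y r) : ConnWithin G ω' x y r := by
  obtain ⟨l, hl, hy, hlen⟩ := h
  exact ⟨l, List.IsChain.imp (fun _ _ hab => ⟨hab.1, hωω' _ hab.2⟩) hl, hy, hlen⟩

theorem robustUnderThinning_distEq (x y : V) (r : ℕ) :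
    RobustUnderThinning r {ω | DistEq G ω x y r} := by
  rintro ω ⟨⟨l, hl, hy, hlen⟩, hmin⟩
  refine ⟨(pathEdges x l).toFinset, ?_, fun η hη => ⟨⟨l, ?_, hy, hlen⟩, fun s hs hconn => ?_⟩⟩
  · exact (List.toFinset_card_le _).trans ((length_pathEdges x l).trans_le hlen)
  · exact isChain_openAdj_and hl fun e he => hη e (List.mem_toFinset.2 he)
  · exact hmin s hs (hconn.mono fun e he => (Bool.and_eq_true_iff.1 he).1)

end Intrinsic

theorem natCast_sphereSize {V : Type*} [Fintype V] (G : SimpleGraph V) (ω : Sym2 V → Bool)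
    (x : V) (r : ℕ) :
    (sphereSize G ω x r : ℝ) = ∑ y, if DistEq G ω x y r then 1 else 0 := by
  rw [sphereSize, Nat.card_eq_fintype_card, Fintype.card_subtype, natCast_card_filter]

theorem percExp_sphereSize_eq_sum_percProb {V : Type*} [Fintype V] [DecidableEq V]
    (G : SimpleGraph V) (p : ℝ) (x : V) (r : ℕ) :
    percExp p (fun ω => (sphereSize G ω x r : ℝ)) = ∑ y, percProb p {ω | DistEq G ω x y r} := by
  simp only [percExp, percProb, natCast_sphereSize, mul_sum, mul_ite, mul_one, mul_zero,
    Set.mem_ofPred_eq]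
  exact sum_comm

theorem sphere_size_expectation_comparison_general {V : Type*} [Fintype V] [DecidableEq V]
    (G : SimpleGraph V) (p₁ p₂ : ℝ) (hp₁ : 0 < p₁) (h₁₂ : p₁ ≤ p₂) (hp₂ : p₂ ≤ 1)
    (v : V) (r : ℕ) :
    percExp p₂ (fun ω => (sphereSize G ω v r : ℝ))
      ≤ (p₂ / p₁) ^ r * percExp p₁ (fun ω => (sphereSize G ω v r : ℝ)) := by
  rw [percExp_sphereSize_eq_sum_percProb, percExp_sphereSize_eq_sum_percProb, mul_sum]
  exact sum_le_sum fun y _ =>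
    (robustUnderThinning_distEq v y r).bernoulliProb_le_div_pow_mul hp₁ h₁₂ hp₂

/-- **Coupling monotonicity of intrinsic spheres (expectations).**  For `0 < p₁ ≤ p₂ ≤ 1`
and any vertex `v` and integer `r > 0`, `E_{p₂}|∂B_v(r)| ≤ (p₂/p₁)^r E_{p₁}|∂B_v(r)|`. -/
theorem sphere_size_expectation_comparison {V : Type*} [Fintype V] [DecidableEq V]
    (G : SimpleGraph V) (p₁ p₂ : ℝ) (hp₁ : 0 < p₁) (h₁₂ : p₁ ≤ p₂) (hp₂ : p₂ ≤ 1)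
    (v : V) (r : ℕ) (hr : 0 < r) :
    percExp p₂ (fun ω => (sphereSize G ω v r : ℝ))
      ≤ (p₂ / p₁) ^ r * percExp p₁ (fun ω => (sphereSize G ω v r : ℝ)) :=
  sphere_size_expectation_comparison_general G p₁ p₂ hp₁ h₁₂ hp₂ v r

end
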